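/- arXiv:2111.01579 — 2 statements merged into one kernel-verified Lean document; each statement's English description precedes it below -/
import Mathlib

section
/- For every integer n ≥ 1, the image of the disk 2^{n+1}ℤ₂ under f is exactly the disk 2^{n−1}ℤ₂, i.e. f(2^{n+1}ℤ₂) = 2^{n−1}ℤ₂ as sets. -/
open Function Set Polynomial


lemma norm9 : ‖(9:ℚ_[2])‖ = 1 := by
  have h1 : ‖((9:ℤ) : ℚ_[2])‖ ≤ 1 := Padic.norm_int_le_one 9
  have h2 : ¬ ‖((9:ℤ) : ℚ_[2])‖ < 1 := by
    rw [Padic.norm_intCast_lt_one_iff]; decide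
  push_cast at h1 h2
  linarith

lemma norm4 : ‖(4:ℚ_[2])‖ = 1/4 := by
  have : (4:ℚ_[2]) = 2^2 := by norm_num
  rw [this, norm_pow]
  have := @Padic.norm_p 2 _
  norm_num at this ⊢
  rw [this]; norm_num

lemma norm_sub_one (x : ℚ_[2]) (hx : ‖x‖ < 1) : ‖x - 1‖ = 1 := by
  have h : ‖x‖ ≠ ‖(-1 : ℚ_[2])‖ := by rw [norm_neg, norm_one]; exact hx.ne
  have := Padic.add_eq_max_of_ne h
  rw [norm_neg, norm_one] at this
  rw [sub_eq_add_neg, this, max_eq_right hx.le]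


/-- The cubic polynomial `f(x) = (9/4)·x·(x−1)²` acting on `ℚ₂`. -/
noncomputable def f : ℚ_[2] → ℚ_[2] := fun x => (9 / 4 : ℚ_[2]) * x * (x - 1) ^ 2

/-- For every `n ≥ 1`, `f(2^{n+1}ℤ₂) = 2^{n−1}ℤ₂` as sets. -/
theorem stmt4 (n : ℕ) (hn : 1 ≤ n) :
    f '' {x : ℚ_[2] | ‖x‖ ≤ (1 / 2 : ℝ) ^ (n + 1)} =
      {x : ℚ_[2] | ‖x‖ ≤ (1 / 2 : ℝ) ^ (n - 1)} := by
  have hpow : ((1:ℝ)/2) ^ (n + 1) = (1/2) ^ (n-1) * (1/4) := by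
    have : n + 1 = (n - 1) + 2 := by omega
    rw [this, pow_add]; norm_num
  have hpow1 : ((1:ℝ)/2) ^ (n + 1) < 1 := by
    apply pow_lt_one₀ <;> norm_num
  have hpown1 : ((1:ℝ)/2) ^ (n - 1) ≤ 1 := by
    apply pow_le_one₀ <;> norm_num
  have h94 : ‖(9/4 : ℚ_[2])‖ = 4 := by
    rw [norm_div, norm9, norm4]; norm_num
  ext y
  simp only [mem_image, mem_setOf_eq]
  constructor
  · rintro ⟨x, hx, rfl⟩
    have hx1 : ‖x‖ < 1 := lt_of_le_of_lt hx hpow1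
    have : ‖f x‖ = 4 * ‖x‖ := by
      rw [f, norm_mul, norm_mul, h94, norm_pow, norm_sub_one x hx1]; ring
    rw [this, hpow] at *
    nlinarith [norm_nonneg x]
  · intro hy
    set c : ℚ_[2] := (4/9) * y with hc
    have hcnorm : ‖c‖ = (1/4) * ‖y‖ := by
      rw [hc, norm_mul, norm_div, norm4, norm9]; ring
    have hclt : ‖c‖ ≤ (1/2)^(n+1) := by
      rw [hcnorm, hpow]; nlinarith [norm_nonneg y]
    have hclt1 : ‖c‖ < 1 := lt_of_le_of_lt hclt hpow1
    set cz : ℤ_[2] := ⟨c, hclt1.le⟩ with hcz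
    set F : Polynomial ℤ_[2] := X^3 - 2 * X^2 + X - Polynomial.C cz with hF
    have heval0 : F.eval 0 = -cz := by simp [hF]
    have hderiv : F.derivative = 3 * X^2 - 4 * X + 1 := by
      rw [hF]; simp [derivative_pow, map_ofNat]; ring
    have hderiv0 : F.derivative.eval 0 = 1 := by simp [hderiv]
    have hnorm : ‖F.eval 0‖ < ‖F.derivative.eval 0‖ ^ 2 := by
      rw [heval0, hderiv0, norm_neg, norm_one, one_pow]
      show ‖(cz : ℚ_[2])‖ < 1
      exact hclt1
    obtain ⟨z, hz, hzdist, -, -⟩ := hensels_lemma hnorm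
    rw [coe_aeval_eq_eval, hderiv0, norm_one, sub_zero] at hzdist
    set w : ℚ_[2] := (z : ℚ_[2]) with hw
    have hwlt : ‖w‖ < 1 := hzdist
    have hzeq : w^3 - 2*w^2 + w = c := by
      have : z^3 - 2*z^2 + z - cz = 0 := by
        have := hz; rw [hF] at this; simpa using this
      have h2 : z^3 - 2*z^2 + z = cz := by linear_combination this
      have := congrArg (Subtype.val) h2
      push_cast at this
      exact_mod_cast this
    have hkey : w * (w - 1)^2 = c := by linear_combination hzeq
    have hwnorm : ‖w‖ ≤ (1/2)^(n+1) := by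
      have : ‖w * (w - 1)^2‖ = ‖w‖ := by
        rw [norm_mul, norm_pow, norm_sub_one w hwlt]; ring
      rw [hkey] at this
      rw [← this]; exact hclt
    refine ⟨w, hwnorm, ?_⟩
    show (9 / 4 : ℚ_[2]) * w * (w - 1) ^ 2 = y
    rw [mul_assoc, hkey, hc]
    have h9 : (9:ℚ_[2]) ≠ 0 := by norm_num
    have h4 : (4:ℚ_[2]) ≠ 0 := by norm_num
    field_simp
end

section
/- For every integer n ≥ 1 and all a, b ∈ {0,1}, the following image equalities of sets hold: f(2^{n+1} + 2^{n+2}ℤ₂) = 2^{n−1} + 2^{n}ℤ₂; f(2^{n+1} + a·2^{n+2} + 2^{n+3}ℤ₂) = 2^{n−1} + a·2^{n} + 2^{n+1}ℤ₂; and f(2^{n+1} + a·2^{n+2} + b·2^{n+3} + 2^{n+4}ℤ₂) = 2^{n−1} + a·2^{n} + b·2^{n+1} + 2^{n+2}ℤ₂. -/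
/-!
On the disk `‖x‖ ≤ 1/4` the map `f` is a small perturbation of the similarity `x ↦ (9/4) x`:
`f x - f y = (9/4) (x - y) (1 + ε)` with `‖ε‖ ≤ 1/8`. In a complete ultrametric field such a map
sends `closedBall c r` onto `closedBall (f c) (‖9/4‖ r) = closedBall (f c) (4 r)`: the inclusion
is the ultrametric inequality, and surjectivity comes from the contraction
`x ↦ x + (4/9) (z - f x)`. Finally `f (4 w) - w = 8 w (18 w² - 9 w + 1)` has norm at most
`‖w‖ / 8`, which for `w = 2^(n-1) u` with `u ∈ ℤ₂` lies within the radius of the image disk, so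
its centre `f (4 w)` may be replaced by `w`.
-/

open Function Set

open Metric NNReal

section SimilarityPerturbation

variable {K : Type*} [NormedField K] [IsUltrametricDist K]
  {g : K → K} {c l : K} {r : ℝ} {k : ℝ≥0}

theorem mapsTo_closedBall_of_norm_sub_sub_le (hk : k < 1)
    (hg : ∀ x ∈ closedBall c r, ∀ y ∈ closedBall c r,
      ‖g x - g y - l * (x - y)‖ ≤ k * ‖l * (x - y)‖) :
    MapsTo g (closedBall c r) (closedBall (g c) (‖l‖ * r)) := by
  intro x hx
  have hc : c ∈ closedBall c r := mem_closedBall_self (nonneg_of_mem_closedBall hx)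
  have hlin : ‖l * (x - c)‖ ≤ ‖l‖ * r := by
    rw [norm_mul]
    exact mul_le_mul_of_nonneg_left (mem_closedBall_iff_norm.1 hx) (norm_nonneg l)
  have herr : ‖g x - g c - l * (x - c)‖ ≤ ‖l * (x - c)‖ :=
    (hg x hx c hc).trans (mul_le_of_le_one_left (norm_nonneg _) (mod_cast hk.le))
  rw [mem_closedBall_iff_norm, ← sub_add_cancel (g x - g c) (l * (x - c))]
  exact (IsUltrametricDist.norm_add_le_max _ _).trans (max_le (herr.trans hlin) hlin)

variable [CompleteSpace K]

theorem closedBall_subset_image_of_norm_sub_sub_le (hk : k < 1) (hl : l ≠ 0)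
    (hg : ∀ x ∈ closedBall c r, ∀ y ∈ closedBall c r,
      ‖g x - g y - l * (x - y)‖ ≤ k * ‖l * (x - y)‖) :
    closedBall (g c) (‖l‖ * r) ⊆ g '' closedBall c r := by
  intro z hz
  have hr : 0 ≤ r := nonneg_of_mul_nonneg_right (nonneg_of_mem_closedBall hz) (norm_pos_iff.2 hl)
  -- Newton's iteration with the constant slope `l`
  set φ : K → K := fun x => x + l⁻¹ * (z - g x)
  have hφ_sub : ∀ x y, φ x - φ y = -(l⁻¹ * (g x - g y - l * (x - y))) := by
    intro x y
    simp only [φ]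
    field_simp
    ring
  have hφ_le : ∀ x ∈ closedBall c r, ∀ y ∈ closedBall c r, ‖φ x - φ y‖ ≤ k * ‖x - y‖ := by
    intro x hx y hy
    rw [hφ_sub, norm_neg, norm_mul, norm_inv]
    calc ‖l‖⁻¹ * ‖g x - g y - l * (x - y)‖ ≤ ‖l‖⁻¹ * (k * ‖l * (x - y)‖) := by
          gcongr; exact hg x hx y hy
      _ = k * ‖x - y‖ := by rw [norm_mul]; field_simp
  have hmaps : MapsTo φ (closedBall c r) (closedBall c r) := by
    intro x hx
    have hc : c ∈ closedBall c r := mem_closedBall_self hr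
    have hφc : ‖φ c - c‖ ≤ r := by
      simp only [φ, add_sub_cancel_left, norm_mul, norm_inv]
      rw [inv_mul_le_iff₀ (norm_pos_iff.2 hl)]
      exact mem_closedBall_iff_norm.1 hz
    have hφx : ‖φ x - φ c‖ ≤ r :=
      (hφ_le x hx c hc).trans <| (mul_le_of_le_one_left (norm_nonneg _) (mod_cast hk.le)).trans
        (mem_closedBall_iff_norm.1 hx)
    rw [mem_closedBall_iff_norm, ← sub_add_sub_cancel _ (φ c)]
    exact (IsUltrametricDist.norm_add_le_max _ _).trans (max_le hφx hφc)
  have hcontr : ContractingWith k (hmaps.restrict φ _ _) :=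
    ⟨hk, LipschitzWith.of_dist_le_mul fun x y => by
      simpa only [Subtype.dist_eq, dist_eq_norm, MapsTo.val_restrict_apply] using hφ_le x x.2 y y.2⟩
  obtain ⟨x, hx, hfix, -⟩ := hcontr.exists_fixedPoint' isClosed_closedBall.isComplete hmaps
    (mem_closedBall_self hr) (edist_ne_top _ _)
  refine ⟨x, hx, ?_⟩
  have : x + l⁻¹ * (z - g x) = x := hfix
  simpa [hl, sub_eq_zero, eq_comm] using this

theorem image_closedBall_of_norm_sub_sub_le (hk : k < 1) (hl : l ≠ 0)
    (hg : ∀ x ∈ closedBall c r, ∀ y ∈ closedBall c r,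
      ‖g x - g y - l * (x - y)‖ ≤ k * ‖l * (x - y)‖) :
    g '' closedBall c r = closedBall (g c) (‖l‖ * r) :=
  (mapsTo_closedBall_of_norm_sub_sub_le hk hg).image_subset.antisymm
    (closedBall_subset_image_of_norm_sub_sub_le hk hl hg)

end SimilarityPerturbation

@[simp, norm_cast]
theorem PadicInt.coe_ofNat {p : ℕ} [Fact p.Prime] (n : ℕ) [n.AtLeastTwo] :
    ((ofNat(n) : ℤ_[p]) : ℚ_[p]) = ofNat(n) :=
  map_ofNat PadicInt.Coe.ringHom n

theorem Padic.norm_two_pow (k : ℕ) : ‖(2 : ℚ_[2]) ^ k‖ = (1 / 2) ^ k := by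
  rw [norm_pow, one_div]
  simpa using congrArg (· ^ k) (Padic.norm_p (p := 2))

theorem Padic.norm_four : ‖(4 : ℚ_[2])‖ = 1 / 4 := by
  rw [show (4 : ℚ_[2]) = 2 ^ 2 by norm_num, Padic.norm_two_pow]
  norm_num

theorem Padic.norm_nine_div_four : ‖(9 / 4 : ℚ_[2])‖ = 4 := by
  have h9 : ‖(9 : ℚ_[2])‖ = 1 := by
    simpa using (Padic.norm_natCast_eq_one_iff (p := 2) (n := 9)).2 (by norm_num)
  rw [norm_div, h9, Padic.norm_four]
  norm_num

theorem Padic.exists_four_mul_eq {x : ℚ_[2]} (hx : ‖x‖ ≤ 1 / 4) :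
    ∃ s : ℤ_[2], 4 * (s : ℚ_[2]) = x := by
  refine ⟨⟨x / 4, ?_⟩, mul_div_cancel₀ x (by norm_num)⟩
  rw [norm_div, Padic.norm_four]
  linarith

theorem norm_f_sub_f_sub_le {x y : ℚ_[2]} (hx : ‖x‖ ≤ 1 / 4) (hy : ‖y‖ ≤ 1 / 4) :
    ‖f x - f y - 9 / 4 * (x - y)‖ ≤ (1 / 8 : ℝ≥0) * ‖9 / 4 * (x - y)‖ := by
  obtain ⟨s, rfl⟩ := Padic.exists_four_mul_eq hx
  obtain ⟨t, rfl⟩ := Padic.exists_four_mul_eq hy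
  set q : ℤ_[2] := 2 * s ^ 2 + 2 * s * t + 2 * t ^ 2 - s - t
  have key : f (4 * s) - f (4 * t) - 9 / 4 * (4 * s - 4 * t) =
      9 / 4 * (4 * s - 4 * t) * (2 ^ 3 * (q : ℚ_[2])) := by
    simp only [f, q]; push_cast; ring
  rw [key, norm_mul, mul_comm, norm_mul, Padic.norm_two_pow]
  gcongr
  calc (1 / 2 : ℝ) ^ 3 * ‖(q : ℚ_[2])‖ ≤ (1 / 2) ^ 3 * 1 := by
        gcongr; exact PadicInt.norm_le_one q
    _ = ((1 / 8 : ℝ≥0) : ℝ) := by norm_num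

theorem norm_f_four_mul_sub_le (w : ℤ_[2]) : ‖f (4 * w) - w‖ ≤ (1 / 8) * ‖(w : ℚ_[2])‖ := by
  have key : f (4 * w) - w = 2 ^ 3 * w * ((18 * w ^ 2 - 9 * w + 1 : ℤ_[2]) : ℚ_[2]) := by
    simp only [f]; push_cast; ring
  rw [key, norm_mul, norm_mul, Padic.norm_two_pow]
  calc (1 / 2 : ℝ) ^ 3 * ‖(w : ℚ_[2])‖ * ‖((18 * w ^ 2 - 9 * w + 1 : ℤ_[2]) : ℚ_[2])‖
      ≤ (1 / 2) ^ 3 * ‖(w : ℚ_[2])‖ * 1 := by gcongr; exact PadicInt.norm_le_one _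
    _ = 1 / 8 * ‖(w : ℚ_[2])‖ := by norm_num

theorem image_f_closedBall {c : ℚ_[2]} {r : ℝ} (hc : ‖c‖ ≤ 1 / 4) (hr : r ≤ 1 / 4) :
    f '' closedBall c r = closedBall (f c) (4 * r) := by
  have hsub : closedBall c r ⊆ closedBall 0 (1 / 4) :=
    (closedBall_subset_closedBall hr).trans
      (IsUltrametricDist.closedBall_eq_of_mem (by simpa using hc)).subset
  rw [← Padic.norm_nine_div_four]
  exact image_closedBall_of_norm_sub_sub_le (by norm_num) (by norm_num) fun x hx y hy =>
    norm_f_sub_f_sub_le (mem_closedBall_zero_iff.1 (hsub hx)) (mem_closedBall_zero_iff.1 (hsub hy))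

theorem image_f_closedBall_four_mul (w : ℤ_[2]) {r : ℝ} (hr : r ≤ 1 / 4)
    (hwr : ‖(w : ℚ_[2])‖ ≤ 32 * r) :
    f '' closedBall (4 * w) r = closedBall (w : ℚ_[2]) (4 * r) := by
  have hw : ‖4 * (w : ℚ_[2])‖ ≤ 1 / 4 := by
    have hw1 : ‖(w : ℚ_[2])‖ ≤ 1 := PadicInt.norm_le_one w
    rw [norm_mul, Padic.norm_four]
    linarith
  rw [image_f_closedBall hw hr]
  refine (IsUltrametricDist.closedBall_eq_of_mem ?_).symm
  rw [mem_closedBall_iff_norm]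
  linarith [norm_f_four_mul_sub_le w]

theorem image_f_disk_two_pow (m j : ℕ) (hj : j ≤ 2) (u : ℤ_[2]) :
    f '' {x | ‖x - 2 ^ (m + 2) * (u : ℚ_[2])‖ ≤ (1 / 2 : ℝ) ^ (m + j + 3)} =
      {x | ‖x - 2 ^ m * (u : ℚ_[2])‖ ≤ (1 / 2 : ℝ) ^ (m + j + 1)} := by
  have hr : (1 / 2 : ℝ) ^ (m + j + 3) ≤ 1 / 4 :=
    calc (1 / 2 : ℝ) ^ (m + j + 3) ≤ (1 / 2) ^ 2 :=
          pow_le_pow_of_le_one (by norm_num) (by norm_num) (by omega)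
      _ = 1 / 4 := by norm_num
  have hw : ‖((2 ^ m * u : ℤ_[2]) : ℚ_[2])‖ ≤ 32 * (1 / 2) ^ (m + j + 3) := by
    have hu : ‖(u : ℚ_[2])‖ ≤ 1 := PadicInt.norm_le_one u
    rw [PadicInt.coe_mul, PadicInt.coe_pow, PadicInt.coe_ofNat, norm_mul, Padic.norm_two_pow]
    calc (1 / 2 : ℝ) ^ m * ‖(u : ℚ_[2])‖ ≤ (1 / 2) ^ m :=
          mul_le_of_le_one_right (by positivity) hu
      _ = 32 * (1 / 2) ^ (m + 5) := by ring
      _ ≤ 32 * (1 / 2) ^ (m + j + 3) := by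
        gcongr _ * ?_
        exact pow_le_pow_of_le_one (by norm_num) (by norm_num) (by omega)
  have hcentre : 2 ^ m * (u : ℚ_[2]) = ((2 ^ m * u : ℤ_[2]) : ℚ_[2]) := by push_cast; rfl
  rw [show (2 : ℚ_[2]) ^ (m + 2) = 4 * 2 ^ m by ring, mul_assoc, hcentre,
    show (1 / 2 : ℝ) ^ (m + j + 1) = 4 * (1 / 2) ^ (m + j + 3) by ring]
  simp only [← mem_closedBall_iff_norm, ofPred_mem_eq]
  exact image_f_closedBall_four_mul (2 ^ m * u) hr hw

/-- For `n ≥ 1` and `a, b ∈ {0,1}`: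
`f(2^{n+1} + 2^{n+2}ℤ₂) = 2^{n−1} + 2^{n}ℤ₂`,
`f(2^{n+1} + a·2^{n+2} + 2^{n+3}ℤ₂) = 2^{n−1} + a·2^{n} + 2^{n+1}ℤ₂`, and
`f(2^{n+1} + a·2^{n+2} + b·2^{n+3} + 2^{n+4}ℤ₂) = 2^{n−1} + a·2^{n} + b·2^{n+1} + 2^{n+2}ℤ₂`. -/
theorem stmt5 (n : ℕ) (hn : 1 ≤ n) (a b : ℚ_[2])
    (ha : a = 0 ∨ a = 1) (hb : b = 0 ∨ b = 1) :
    (f '' {x : ℚ_[2] | ‖x - 2 ^ (n + 1)‖ ≤ (1 / 2 : ℝ) ^ (n + 2)} =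
        {x : ℚ_[2] | ‖x - 2 ^ (n - 1)‖ ≤ (1 / 2 : ℝ) ^ n}) ∧
    (f '' {x : ℚ_[2] | ‖x - (2 ^ (n + 1) + a * 2 ^ (n + 2))‖ ≤ (1 / 2 : ℝ) ^ (n + 3)} =
        {x : ℚ_[2] | ‖x - (2 ^ (n - 1) + a * 2 ^ n)‖ ≤ (1 / 2 : ℝ) ^ (n + 1)}) ∧
    (f '' {x : ℚ_[2] |
          ‖x - (2 ^ (n + 1) + a * 2 ^ (n + 2) + b * 2 ^ (n + 3))‖ ≤ (1 / 2 : ℝ) ^ (n + 4)} =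
        {x : ℚ_[2] |
          ‖x - (2 ^ (n - 1) + a * 2 ^ n + b * 2 ^ (n + 1))‖ ≤ (1 / 2 : ℝ) ^ (n + 2)}) := by
  obtain ⟨m, rfl⟩ := Nat.exists_eq_add_of_le' hn
  obtain ⟨a, rfl⟩ : ∃ a' : ℤ_[2], (a' : ℚ_[2]) = a :=
    ⟨⟨a, by rcases ha with rfl | rfl <;> simp⟩, rfl⟩
  obtain ⟨b, rfl⟩ : ∃ b' : ℤ_[2], (b' : ℚ_[2]) = b :=
    ⟨⟨b, by rcases hb with rfl | rfl <;> simp⟩, rfl⟩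
  refine ⟨?_, ?_, ?_⟩
  · convert image_f_disk_two_pow m 0 (by norm_num) 1 using 5 <;> push_cast <;> ring_nf
  · convert image_f_disk_two_pow m 1 (by norm_num) (1 + 2 * a) using 5 <;> push_cast <;> ring_nf
  · convert image_f_disk_two_pow m 2 le_rfl (1 + 2 * a + 4 * b) using 5 <;> push_cast <;> ring_nf
end
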